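/- arXiv:1103.4349 — 2 statements merged into one kernel-verified Lean document; each statement's English description precedes it below -/
import Mathlib

section
/- Let E be a finite-dimensional real inner product space, m ≥ 1, and let H be the space of m-tuples of elements of E with inner product ⟨h, h'⟩ = Σ_{i=1}^m ⟨h_i, h'_i⟩ (identifying ℝᵐ ⊗ E with H). Let F ⊆ H be a linear subspace, Π the orthogonal projection of H onto F and Π^⊥ the orthogonal projection onto F^⊥. Let φ : ℝᵐ → E be differentiable at a point x with φ(x) ≠ 0, let Dφ(x) := (∂φ/∂x₁(x), …, ∂φ/∂x_m(x)) ∈ H, and suppose Π(Dφ(x)) = 0. Then the function y ↦ ‖φ(y)‖ is differentiable at x, and there exists ξ₀ ∈ ℝᵐ with ‖ξ₀‖ = 1 such that ‖d‖φ‖(x)‖ · ‖φ(x)‖ ≤ ‖Dφ(x)‖_H · ‖Π^⊥(ξ₀ ⊗ φ(x))‖_H, where d‖φ‖(x) is the Fréchet derivative at x of y ↦ ‖φ(y)‖, ‖d‖φ‖(x)‖ is its operator norm, and ξ₀ ⊗ φ(x) denotes the tuple ((ξ₀)₁·φ(x), …, (ξ₀)_m·φ(x)) ∈ H. -/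
open scoped RealInnerProductSpace

/-!
Write `L` for the derivative of `‖φ‖` at `x`. Then `L v · ‖φ x‖ = ⟪φ x, Dφ(x) v⟫ = ⟪v ⊗ φ x, Dφ(x)⟫_H`
for every `v`, and since `Dφ(x) ∈ Fᗮ` the tuple `v ⊗ φ x` may be replaced by its projection onto
`Fᗮ`. Evaluating at a unit vector `ξ₀` with `L ξ₀ = ‖L‖` (the normalised Riesz representative of
`L`) and applying Cauchy–Schwarz in `H` gives the inequality.
-/

theorem HasFDerivAt.norm {G E : Type*} [NormedAddCommGroup G] [NormedSpace ℝ G]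
    [NormedAddCommGroup E] [InnerProductSpace ℝ E] {f : G → E} {f' : G →L[ℝ] E} {x : G}
    (hf : HasFDerivAt f f' x) (h0 : f x ≠ 0) :
    HasFDerivAt (fun y => ‖f y‖) (‖f x‖⁻¹ • (innerSL ℝ (f x)).comp f') x := by
  have hx : ‖f x‖ ≠ 0 := norm_ne_zero_iff.mpr h0
  convert hf.norm_sq.sqrt (pow_ne_zero 2 hx) using 1
  · simp only [Real.sqrt_sq (norm_nonneg _)]
  · ext v
    simp only [smul_apply, ContinuousLinearMap.comp_apply, coe_innerSL_apply, smul_eq_mul,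
      Real.sqrt_sq (norm_nonneg _), one_div, mul_inv_rev, nsmul_eq_mul, Nat.cast_ofNat]
    field_simp

theorem ContinuousLinearMap.exists_norm_eq_one_apply_eq_opNorm {V : Type*}
    [NormedAddCommGroup V] [InnerProductSpace ℝ V] [CompleteSpace V] [Nontrivial V] (L : V →L[ℝ] ℝ) :
    ∃ ξ : V, ‖ξ‖ = 1 ∧ L ξ = ‖L‖ := by
  obtain ⟨g, rfl⟩ := (InnerProductSpace.toDual ℝ V).surjective L
  rcases eq_or_ne g 0 with rfl | hg
  · obtain ⟨ξ, hξ⟩ := exists_norm_eq V zero_le_one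
    exact ⟨ξ, hξ, by simp⟩
  · refine ⟨‖g‖⁻¹ • g, by simp [norm_smul, hg], ?_⟩
    rw [LinearIsometryEquiv.norm_map, map_smul, InnerProductSpace.toDual_apply_apply,
      real_inner_self_eq_norm_mul_norm, smul_eq_mul]
    field_simp [norm_ne_zero_iff.mpr hg]

theorem inner_tensor_partials_eq_inner_apply {ι E : Type*} [Fintype ι] [DecidableEq ι]
    [NormedAddCommGroup E] [InnerProductSpace ℝ E] (f' : EuclideanSpace ℝ ι →L[ℝ] E)
    (ξ : EuclideanSpace ℝ ι) (u : E) :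
    ⟪((WithLp.equiv 2 (∀ _ : ι, E)).symm (fun i => ξ i • u) : PiLp 2 fun _ : ι => E),
      (WithLp.equiv 2 (∀ _ : ι, E)).symm (fun i => f' (EuclideanSpace.single i 1))⟫ =
      ⟪u, f' ξ⟫ := by
  conv_rhs => rw [← (EuclideanSpace.basisFun ι ℝ).sum_repr ξ]
  simp [PiLp.inner_apply, inner_sum, real_inner_smul_left, real_inner_smul_right]

/-- If `φ : ℝᵐ → E` is differentiable at `x`, `φ x ≠ 0`, and the tuple
of partial derivatives `Dφ(x) ∈ H = (ℝᵐ ⊗ E, ⟨h,h'⟩ = Σᵢ⟨hᵢ,h'ᵢ⟩)` lies in the kernel of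
the orthogonal projection `Π` onto `F ⊆ H`, then `y ↦ ‖φ y‖` is differentiable at `x` and
`‖d‖φ‖(x)‖ · ‖φ(x)‖ ≤ ‖Dφ(x)‖ · ‖Π^⊥(ξ₀ ⊗ φ(x))‖` for some unit covector `ξ₀`. -/
theorem stmt5 {E : Type*} [NormedAddCommGroup E] [InnerProductSpace ℝ E]
    [FiniteDimensional ℝ E] (m : ℕ) (hm : 1 ≤ m)
    (F : Submodule ℝ (PiLp 2 fun _ : Fin m => E))
    (φ : EuclideanSpace ℝ (Fin m) → E) (x : EuclideanSpace ℝ (Fin m))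
    (hφ : DifferentiableAt ℝ φ x) (hx : φ x ≠ 0)
    (D : PiLp 2 fun _ : Fin m => E)
    (hD : D = (WithLp.equiv 2 (∀ _ : Fin m, E)).symm
      (fun i => fderiv ℝ φ x (EuclideanSpace.single i 1)))
    (hker : Submodule.orthogonalProjection F D = 0) :
    DifferentiableAt ℝ (fun y => ‖φ y‖) x ∧
      ∃ ξ₀ : EuclideanSpace ℝ (Fin m), ‖ξ₀‖ = 1 ∧
        ‖fderiv ℝ (fun y => ‖φ y‖) x‖ * ‖φ x‖ ≤
          ‖D‖ * ‖(Submodule.orthogonalProjection Fᗮ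
            ((WithLp.equiv 2 (∀ _ : Fin m, E)).symm (fun i => ξ₀ i • φ x)) :
              PiLp 2 fun _ : Fin m => E)‖ := by
  have hL := hφ.hasFDerivAt.norm hx
  have : Nonempty (Fin m) := ⟨⟨0, hm⟩⟩
  obtain ⟨ξ₀, hξ₀, hLξ₀⟩ := (fderiv ℝ (fun y => ‖φ y‖) x).exists_norm_eq_one_apply_eq_opNorm
  refine ⟨hL.differentiableAt, ξ₀, hξ₀, ?_⟩
  have hD_perp : D ∈ Fᗮ := Submodule.orthogonalProjectionOnto_eq_zero_iff.mp hker
  set w : PiLp 2 (fun _ : Fin m => E) :=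
    (WithLp.equiv 2 (∀ _ : Fin m, E)).symm (fun i => ξ₀ i • φ x)
  calc ‖fderiv ℝ (fun y => ‖φ y‖) x‖ * ‖φ x‖ = ⟪φ x, fderiv ℝ φ x ξ₀⟫ := by
        rw [← hLξ₀, hL.fderiv]
        simp only [smul_apply, ContinuousLinearMap.comp_apply,
          innerSL_apply_apply, smul_eq_mul]
        field_simp [norm_ne_zero_iff.mpr hx]
    _ = ⟪w, D⟫ := by rw [hD, inner_tensor_partials_eq_inner_apply]
    _ = ⟪(Fᗮ.orthogonalProjectionOnto w : PiLp 2 fun _ : Fin m => E), D⟫ :=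
        (Submodule.inner_orthogonalProjectionOnto_eq_of_mem_right ⟨D, hD_perp⟩ w).symm
    _ ≤ _ := (real_inner_le_norm _ _).trans_eq (mul_comm _ _)
end

section
/- Let V be a real normed vector space and E₁, E₂ real inner product spaces. Let φ₁ : V → E₁ and φ₂ : V → E₂, let x ∈ V with (φ₁(x), φ₂(x)) ≠ (0,0), and suppose the functions y ↦ ‖φ₁(y)‖, y ↦ ‖φ₂(y)‖ and n(y) := √(‖φ₁(y)‖² + ‖φ₂(y)‖²) are all differentiable at x. Suppose there are real numbers α₁, α₂, N₁, N₂ ≥ 0 such that ‖d‖φ₁‖(x)‖ ≤ α₁·N₁ and ‖d‖φ₂‖(x)‖ ≤ α₂·N₂ (operator norms of the Fréchet derivatives at x). Then ‖dn(x)‖ ≤ max{α₁, α₂} · √(N₁² + N₂²). -/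
/-!
Writing `a = ‖φ₁ x‖`, `b = ‖φ₂ x‖` and `n = √(a² + b²) > 0`, the chain rule gives
`dn = n⁻¹ (a d‖φ₁‖ + b d‖φ₂‖)`, and Cauchy–Schwarz in `ℝ²` bounds its norm by
`√(‖d‖φ₁‖‖² + ‖d‖φ₂‖‖²)`. Each `‖d‖φᵢ‖‖` is at most `max α₁ α₂ · Nᵢ`.
-/

theorem mul_add_mul_le_sqrt_mul_sqrt (a b c d : ℝ) :
    a * c + b * d ≤ √(a ^ 2 + b ^ 2) * √(c ^ 2 + d ^ 2) := by
  rw [← Real.sqrt_mul (by positivity)]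
  apply Real.le_sqrt_of_sq_le
  nlinarith [sq_nonneg (a * d - b * c)]

theorem norm_smul_add_smul_le {F : Type*} [NormedAddCommGroup F] [NormedSpace ℝ F]
    (a b : ℝ) (u v : F) :
    ‖a • u + b • v‖ ≤ √(a ^ 2 + b ^ 2) * √(‖u‖ ^ 2 + ‖v‖ ^ 2) :=
  calc ‖a • u + b • v‖ ≤ |a| * ‖u‖ + |b| * ‖v‖ := by
        simpa only [norm_smul, Real.norm_eq_abs] using norm_add_le (a • u) (b • v)
    _ ≤ √(|a| ^ 2 + |b| ^ 2) * √(‖u‖ ^ 2 + ‖v‖ ^ 2) := mul_add_mul_le_sqrt_mul_sqrt ..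
    _ = √(a ^ 2 + b ^ 2) * √(‖u‖ ^ 2 + ‖v‖ ^ 2) := by simp only [sq_abs]

theorem sqrt_sq_add_sq_le_mul_sqrt {d₁ d₂ m N₁ N₂ : ℝ} (hd₁ : 0 ≤ d₁) (hd₂ : 0 ≤ d₂)
    (hm : 0 ≤ m) (h₁ : d₁ ≤ m * N₁) (h₂ : d₂ ≤ m * N₂) :
    √(d₁ ^ 2 + d₂ ^ 2) ≤ m * √(N₁ ^ 2 + N₂ ^ 2) :=
  calc √(d₁ ^ 2 + d₂ ^ 2) ≤ √((m * N₁) ^ 2 + (m * N₂) ^ 2) := by gcongr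
    _ = m * √(N₁ ^ 2 + N₂ ^ 2) := by
        rw [mul_pow, mul_pow, ← mul_add, Real.sqrt_mul (sq_nonneg m), Real.sqrt_sq hm]

section SqrtSumSq

variable {V : Type*} [NormedAddCommGroup V] [NormedSpace ℝ V] {f g : V → ℝ} {x : V}

theorem HasFDerivAt.sqrt_sq_add_sq {f' g' : V →L[ℝ] ℝ} (hf : HasFDerivAt f f' x)
    (hg : HasFDerivAt g g' x) (hx : f x ^ 2 + g x ^ 2 ≠ 0) :
    HasFDerivAt (fun y => √(f y ^ 2 + g y ^ 2))
      ((√(f x ^ 2 + g x ^ 2))⁻¹ • (f x • f' + g x • g')) x := by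
  convert ((hf.pow 2).add (hg.pow 2)).sqrt hx using 1
  simp only [Pi.add_apply]
  module

theorem norm_fderiv_sqrt_sq_add_sq_le (hf : DifferentiableAt ℝ f x)
    (hg : DifferentiableAt ℝ g x) (hx : f x ^ 2 + g x ^ 2 ≠ 0) :
    ‖fderiv ℝ (fun y => √(f y ^ 2 + g y ^ 2)) x‖ ≤
      √(‖fderiv ℝ f x‖ ^ 2 + ‖fderiv ℝ g x‖ ^ 2) := by
  have hn : 0 < √(f x ^ 2 + g x ^ 2) :=
    Real.sqrt_pos.mpr (lt_of_le_of_ne (by positivity) hx.symm)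
  rw [(hf.hasFDerivAt.sqrt_sq_add_sq hg.hasFDerivAt hx).fderiv, norm_smul, norm_inv,
    Real.norm_of_nonneg hn.le, inv_mul_le_iff₀ hn]
  exact norm_smul_add_smul_le ..

end SqrtSumSq

theorem stmt7_general {V E₁ E₂ : Type*} [NormedAddCommGroup V] [NormedSpace ℝ V]
    [NormedAddCommGroup E₁] [NormedAddCommGroup E₂]
    (φ₁ : V → E₁) (φ₂ : V → E₂) (x : V) (hx : ¬(φ₁ x = 0 ∧ φ₂ x = 0))
    (h₁ : DifferentiableAt ℝ (fun y => ‖φ₁ y‖) x)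
    (h₂ : DifferentiableAt ℝ (fun y => ‖φ₂ y‖) x)
    (α₁ α₂ N₁ N₂ : ℝ) (hα₁ : 0 ≤ α₁) (hN₁ : 0 ≤ N₁) (hN₂ : 0 ≤ N₂)
    (hb₁ : ‖fderiv ℝ (fun y => ‖φ₁ y‖) x‖ ≤ α₁ * N₁)
    (hb₂ : ‖fderiv ℝ (fun y => ‖φ₂ y‖) x‖ ≤ α₂ * N₂) :
    ‖fderiv ℝ (fun y => Real.sqrt (‖φ₁ y‖ ^ 2 + ‖φ₂ y‖ ^ 2)) x‖ ≤
      max α₁ α₂ * Real.sqrt (N₁ ^ 2 + N₂ ^ 2) := by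
  have hx' : ‖φ₁ x‖ ^ 2 + ‖φ₂ x‖ ^ 2 ≠ 0 := by
    simpa [add_eq_zero_iff_of_nonneg, sq_nonneg] using hx
  calc _ ≤ √(‖fderiv ℝ (fun y => ‖φ₁ y‖) x‖ ^ 2 + ‖fderiv ℝ (fun y => ‖φ₂ y‖) x‖ ^ 2) :=
        norm_fderiv_sqrt_sq_add_sq_le h₁ h₂ hx'
    _ ≤ _ := sqrt_sq_add_sq_le_mul_sqrt (norm_nonneg _) (norm_nonneg _)
        (le_max_of_le_left hα₁)
        (hb₁.trans (mul_le_mul_of_nonneg_right (le_max_left _ _) hN₁))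
        (hb₂.trans (mul_le_mul_of_nonneg_right (le_max_right _ _) hN₂))

/-- Pointwise Kato inequality for a direct sum: if
`‖d‖φ₁‖(x)‖ ≤ α₁N₁` and `‖d‖φ₂‖(x)‖ ≤ α₂N₂`, then the norm
`n(y) = √(‖φ₁ y‖² + ‖φ₂ y‖²)` of the pair satisfies
`‖dn(x)‖ ≤ max{α₁,α₂} · √(N₁² + N₂²)`. -/
theorem stmt7 {V E₁ E₂ : Type*} [NormedAddCommGroup V] [NormedSpace ℝ V]
    [NormedAddCommGroup E₁] [InnerProductSpace ℝ E₁]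
    [NormedAddCommGroup E₂] [InnerProductSpace ℝ E₂]
    (φ₁ : V → E₁) (φ₂ : V → E₂) (x : V) (hx : ¬(φ₁ x = 0 ∧ φ₂ x = 0))
    (h₁ : DifferentiableAt ℝ (fun y => ‖φ₁ y‖) x)
    (h₂ : DifferentiableAt ℝ (fun y => ‖φ₂ y‖) x)
    (hn : DifferentiableAt ℝ (fun y => Real.sqrt (‖φ₁ y‖ ^ 2 + ‖φ₂ y‖ ^ 2)) x)
    (α₁ α₂ N₁ N₂ : ℝ) (hα₁ : 0 ≤ α₁) (hα₂ : 0 ≤ α₂) (hN₁ : 0 ≤ N₁) (hN₂ : 0 ≤ N₂)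
    (hb₁ : ‖fderiv ℝ (fun y => ‖φ₁ y‖) x‖ ≤ α₁ * N₁)
    (hb₂ : ‖fderiv ℝ (fun y => ‖φ₂ y‖) x‖ ≤ α₂ * N₂) :
    ‖fderiv ℝ (fun y => Real.sqrt (‖φ₁ y‖ ^ 2 + ‖φ₂ y‖ ^ 2)) x‖ ≤
      max α₁ α₂ * Real.sqrt (N₁ ^ 2 + N₂ ^ 2) :=
  stmt7_general φ₁ φ₂ x hx h₁ h₂ α₁ α₂ N₁ N₂ hα₁ hN₁ hN₂ hb₁ hb₂
end
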